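/- arXiv:2506.19025 — 2 statements merged into one kernel-verified Lean document; each statement's English description precedes it below -/
import Mathlib

section
/- Let φ : ℝ^d → ℝ be a differentiable strictly convex function, let P be a probability measure on ℝ^d, and suppose Q = (∇φ₀)_#P for a differentiable convex function φ₀ with T₀ = ∇φ₀. Then the semi-dual excess satisfies S_{P,Q}(φ) − S_{P,Q}(φ₀) = ∫ [φ*(T₀(x)) − φ*(∇φ(x)) − ⟨x, T₀(x) − ∇φ(x)⟩] dP(x), where S_{P,Q}(ψ) = ∫ ψ dP + ∫ ψ* dQ and ψ* is the Fenchel conjugate. -/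
/-!
For a differentiable convex `ψ`, the gradient inequality shows that the supremum defining
`ψ*(∇ψ x)` is attained at `x`, so `ψ*(∇ψ x) = ⟪x, ∇ψ x⟫ - ψ x` (Fenchel–Young equality).
Writing `∫ ψ* dQ = ∫ ψ*(∇φ₀ x) dP` by the pushforward and using this identity for `φ₀` and
at the points `∇φ x` for `φ`, both sides become `∫ (φ*(∇φ₀) - φ₀*(∇φ₀) + φ - φ₀) dP`.
-/

open MeasureTheory RealInnerProductSpace

variable {d : ℕ}

/-- The Fenchel conjugate `φ*(y) = sup_x [⟨x,y⟩ − φ(x)]`. -/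
noncomputable def fenchel (φ : EuclideanSpace ℝ (Fin d) → ℝ) (y : EuclideanSpace ℝ (Fin d)) : ℝ :=
  ⨆ x : EuclideanSpace ℝ (Fin d), (⟪x, y⟫ - φ x)

/-- The semi-dual functional `S_{P,Q}(φ) = ∫ φ dP + ∫ φ* dQ`. -/
noncomputable def semiDual (P Q : Measure (EuclideanSpace ℝ (Fin d)))
    (φ : EuclideanSpace ℝ (Fin d) → ℝ) : ℝ :=
  ∫ x, φ x ∂P + ∫ y, fenchel φ y ∂Q

section
variable {E : Type*} [NormedAddCommGroup E] [NormedSpace ℝ E] {s : Set E} {f : E → ℝ} {x y : E}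

theorem ConvexOn.add_fderiv_sub_le {f' : StrongDual ℝ E} (hf : ConvexOn ℝ s f) (hx : x ∈ s)
    (hy : y ∈ s) (hf' : HasFDerivAt f f' x) : f x + f' (y - x) ≤ f y := by
  let ℓ : ℝ →ᵃ[ℝ] E := AffineMap.lineMap x y
  have hg : ConvexOn ℝ (ℓ ⁻¹' s) (f ∘ ℓ) := hf.comp_affineMap ℓ
  have hg' : HasDerivAt (f ∘ ℓ) (f' (y - x)) 0 := by
    rw [← AffineMap.lineMap_apply_zero x y (k := ℝ)] at hf'
    exact hf'.comp_hasDerivAt 0 AffineMap.hasDerivAt_lineMap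
  simpa [ℓ, slope, le_sub_iff_add_le'] using
    hg.le_slope_of_hasDerivAt (by simpa [ℓ]) (by simpa [ℓ]) zero_lt_one hg'

end

section
variable {F : Type*} [NormedAddCommGroup F] [InnerProductSpace ℝ F] [CompleteSpace F]
  {s : Set F} {f : F → ℝ} {x y : F}

theorem ConvexOn.add_inner_sub_le_of_hasGradientAt {f' : F} (hf : ConvexOn ℝ s f) (hx : x ∈ s)
    (hy : y ∈ s) (hf' : HasGradientAt f f' x) : f x + ⟪f', y - x⟫ ≤ f y := by
  simpa using hf.add_fderiv_sub_le hx hy hf'.hasFDerivAt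

theorem measurable_gradient [MeasurableSpace F] [BorelSpace F] : Measurable (gradient f) :=
  (InnerProductSpace.toDual ℝ F).symm.continuous.measurable.comp (measurable_fderiv ℝ f)

end

theorem fenchel_gradient {φ : EuclideanSpace ℝ (Fin d) → ℝ} {x : EuclideanSpace ℝ (Fin d)}
    (hφ : ConvexOn ℝ Set.univ φ) (hd : DifferentiableAt ℝ φ x) :
    fenchel φ (gradient φ x) = ⟪x, gradient φ x⟫ - φ x := by
  have hmax : ∀ z, ⟪z, gradient φ x⟫ - φ z ≤ ⟪x, gradient φ x⟫ - φ x := fun z => by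
    have := hφ.add_inner_sub_le_of_hasGradientAt (Set.mem_univ x) (Set.mem_univ z)
      hd.hasGradientAt
    rw [inner_sub_right, real_inner_comm z, real_inner_comm x] at this
    linarith
  exact le_antisymm (ciSup_le hmax) (le_ciSup ⟨_, Set.forall_mem_range.2 hmax⟩ x)

theorem semiDual_excess_eq_bregman_general
    (P Q : Measure (EuclideanSpace ℝ (Fin d)))
    (φ φ₀ : EuclideanSpace ℝ (Fin d) → ℝ)
    (hφ_diff : Differentiable ℝ φ)
    (hφ_sconvex : StrictConvexOn ℝ Set.univ φ)
    (hφ₀_diff : Differentiable ℝ φ₀)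
    (hφ₀_convex : ConvexOn ℝ Set.univ φ₀)
    (hpush : Measure.map (gradient φ₀) P = Q)
    (hint_φ : Integrable φ P)
    (hint_φ₀ : Integrable φ₀ P)
    (hint_φstar : Integrable (fenchel φ) Q)
    (hint_φ₀star : Integrable (fenchel φ₀) Q) :
    semiDual P Q φ - semiDual P Q φ₀ =
      ∫ x, (fenchel φ (gradient φ₀ x) - fenchel φ (gradient φ x)
        - ⟪x, gradient φ₀ x - gradient φ x⟫) ∂P := by
  subst hpush
  have hT₀ : AEMeasurable (gradient φ₀) P := measurable_gradient.aemeasurable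
  have hφstar : Integrable (fun x => fenchel φ (gradient φ₀ x)) P :=
    (integrable_map_measure hint_φstar.1 hT₀).mp hint_φstar
  have hφ₀star : Integrable (fun x => fenchel φ₀ (gradient φ₀ x)) P :=
    (integrable_map_measure hint_φ₀star.1 hT₀).mp hint_φ₀star
  have hintegrand : ∀ x, fenchel φ (gradient φ₀ x) - fenchel φ (gradient φ x)
        - ⟪x, gradient φ₀ x - gradient φ x⟫
      = (fenchel φ (gradient φ₀ x) - fenchel φ₀ (gradient φ₀ x)) + (φ x - φ₀ x) := fun x => by
    rw [fenchel_gradient hφ_sconvex.convexOn (hφ_diff x),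
      fenchel_gradient hφ₀_convex (hφ₀_diff x), inner_sub_right]
    ring
  simp only [hintegrand]
  rw [integral_add (f := fun x => _ - _) (g := fun x => _ - _) (hφstar.sub hφ₀star)
    (hint_φ.sub hint_φ₀), integral_sub hφstar hφ₀star,
    integral_sub hint_φ hint_φ₀, semiDual, semiDual, integral_map hT₀ hint_φstar.1,
    integral_map hT₀ hint_φ₀star.1]
  ring

/-- Bregman-divergence identity for the semi-dual excess: if `φ` is differentiable and strictly
convex, `φ₀` is differentiable and convex, and `Q = (∇φ₀)_# P` with `T₀ = ∇φ₀`, then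
`S_{P,Q}(φ) − S_{P,Q}(φ₀) = ∫ [φ*(T₀(x)) − φ*(∇φ(x)) − ⟨x, T₀(x) − ∇φ(x)⟩] dP(x)`. -/
theorem semiDual_excess_eq_bregman
    (P Q : Measure (EuclideanSpace ℝ (Fin d)))
    [IsProbabilityMeasure P] [IsProbabilityMeasure Q]
    (φ φ₀ : EuclideanSpace ℝ (Fin d) → ℝ)
    (hφ_diff : Differentiable ℝ φ)
    (hφ_sconvex : StrictConvexOn ℝ Set.univ φ)
    (hφ₀_diff : Differentiable ℝ φ₀)
    (hφ₀_convex : ConvexOn ℝ Set.univ φ₀)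
    (hpush : Measure.map (gradient φ₀) P = Q)
    (hint_φ : Integrable φ P)
    (hint_φ₀ : Integrable φ₀ P)
    (hint_φstar : Integrable (fenchel φ) Q)
    (hint_φ₀star : Integrable (fenchel φ₀) Q)
    (hint_breg : Integrable (fun x =>
      fenchel φ (gradient φ₀ x) - fenchel φ (gradient φ x)
        - ⟪x, gradient φ₀ x - gradient φ x⟫) P) :
    semiDual P Q φ - semiDual P Q φ₀ =
      ∫ x, (fenchel φ (gradient φ₀ x) - fenchel φ (gradient φ x)
        - ⟪x, gradient φ₀ x - gradient φ x⟫) ∂P :=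
  semiDual_excess_eq_bregman_general P Q φ φ₀ hφ_diff hφ_sconvex hφ₀_diff hφ₀_convex hpush hint_φ
    hint_φ₀ hint_φstar hint_φ₀star
end

section
/- Let T : ℝ → ℝ be a monotone nondecreasing map pushing P forward onto Q, where P is atomless. Then T agrees P-almost everywhere with the map x ↦ F_Q⁻¹(F_P(x)). In particular, the monotone transport map between an atomless P and any Q on ℝ is P-a.e. unique. -/
/-!
Write `u = F_P(x)` and `Q = T_#P`. Monotonicity gives `{≤ x} ⊆ T⁻¹{≤ T x}`, hence `u ≤ F_Q(T x)`
and `F_Q⁻¹(u) ≤ T x`. Conversely, if `F_Q⁻¹(u) < q < T x` then `u ≤ F_Q(q)`, while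
`T⁻¹{≤ q} ⊆ {≤ x}` gives `F_Q(q) ≤ u`, so `F_P(x) = F_Q(q)`. Since `P` is atomless, `F_P` is
continuous and each of its level sets is `P`-null, so for rational `q` this happens only on a
`P`-null set of `x`, as do `u = 0` and `u = 1`.
-/

open MeasureTheory ProbabilityTheory

/-- The generalized quantile function of a measure `Q` on `ℝ`:
`F_Q⁻¹(u) = inf {y | F_Q(y) ≥ u}`. -/
noncomputable def quantile (Q : Measure ℝ) (u : ℝ) : ℝ :=
  sInf {y : ℝ | u ≤ cdf Q y}

open Set

namespace ProbabilityTheory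

section NullSingleton

variable (P : Measure ℝ) [IsProbabilityMeasure P] [NullSingletonClass P]

theorem continuous_cdf : Continuous (cdf P) := by
  refine continuous_iff_continuousAt.2 fun x => ?_
  have hleft : Function.leftLim (cdf P) x = cdf P x := by
    have h := (cdf P).measure_singleton x
    rw [measure_cdf, measure_singleton, eq_comm, ENNReal.ofReal_eq_zero] at h
    exact le_antisymm ((monotone_cdf P).leftLim_le le_rfl) (by linarith)
  rw [(monotone_cdf P).continuousAt_iff_leftLim_eq_rightLim, hleft, (cdf P).rightLim_eq]

variable {P} in
theorem measure_Icc_eq_zero_of_cdf_eq {a b : ℝ} (h : cdf P a = cdf P b) : P (Icc a b) = 0 := by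
  rw [← measure_congr Ioc_ae_eq_Icc, ← measure_cdf P, StieltjesFunction.measure_Ioc, h, sub_self,
    ENNReal.ofReal_zero]

theorem measure_cdf_preimage_singleton (c : ℝ) : P (cdf P ⁻¹' {c}) = 0 := by
  have hclosed : IsClosed (cdf P ⁻¹' {c}) := isClosed_singleton.preimage (continuous_cdf P)
  rw [← Metric.iUnion_inter_closedBall_nat (cdf P ⁻¹' {c}) 0]
  refine measure_iUnion_null fun n => ?_
  set K := cdf P ⁻¹' {c} ∩ Metric.closedBall 0 n
  have hK : IsCompact K := (isCompact_closedBall 0 _).inter_left hclosed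
  rcases K.eq_empty_or_nonempty with hempty | hne
  · rw [hempty, measure_empty]
  have hsub : K ⊆ Icc (sInf K) (sSup K) := fun x hx =>
    ⟨csInf_le hK.bddBelow hx, le_csSup hK.bddAbove hx⟩
  exact measure_mono_null hsub (measure_Icc_eq_zero_of_cdf_eq
    ((hK.sInf_mem hne).1.trans (hK.sSup_mem hne).1.symm))

theorem ae_cdf_notMem {C : Set ℝ} (hC : C.Countable) : ∀ᵐ x ∂P, cdf P x ∉ C := by
  have hbad : {x | ¬cdf P x ∉ C} = ⋃ c ∈ C, cdf P ⁻¹' {c} := by ext; simp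
  rw [ae_iff, hbad, measure_biUnion_null_iff hC]
  exact fun c _ => measure_cdf_preimage_singleton P c

end NullSingleton

section Quantile

variable (Q : Measure ℝ) {u y : ℝ}

theorem bddBelow_setOf_le_cdf (hu : 0 < u) : BddBelow {y | u ≤ cdf Q y} := by
  obtain ⟨z, hz⟩ := ((tendsto_cdf_atBot Q).eventually (gt_mem_nhds hu)).exists
  refine ⟨z, fun y hy => le_of_not_gt fun hyz => ?_⟩
  exact (hy.trans (monotone_cdf Q hyz.le)).not_gt hz

theorem nonempty_setOf_le_cdf (hu : u < 1) : {y | u ≤ cdf Q y}.Nonempty := by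
  obtain ⟨y, hy⟩ := ((tendsto_cdf_atTop Q).eventually (lt_mem_nhds hu)).exists
  exact ⟨y, hy.le⟩

variable {Q}

theorem quantile_le_of_le_cdf (hu : 0 < u) (h : u ≤ cdf Q y) : quantile Q u ≤ y :=
  csInf_le (bddBelow_setOf_le_cdf Q hu) h

theorem le_cdf_of_quantile_lt (hu : u < 1) (h : quantile Q u < y) : u ≤ cdf Q y := by
  obtain ⟨z, hz, hzy⟩ := exists_lt_of_csInf_lt (nonempty_setOf_le_cdf Q hu) h
  exact hz.trans (monotone_cdf Q hzy.le)

end Quantile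

section Monotone

variable {P : Measure ℝ} [IsProbabilityMeasure P] {T : ℝ → ℝ}

theorem cdf_le_cdf_map_apply (hT : Monotone T) (x : ℝ) : cdf P x ≤ cdf (P.map T) (T x) := by
  have := Measure.isProbabilityMeasure_map (μ := P) hT.measurable.aemeasurable
  rw [← ENNReal.ofReal_le_ofReal_iff (cdf_nonneg _ _), ofReal_cdf, ofReal_cdf,
    Measure.map_apply hT.measurable measurableSet_Iic]
  exact measure_mono fun z hz => hT hz

theorem cdf_map_le_cdf_of_lt (hT : Monotone T) {x y : ℝ} (h : y < T x) :
    cdf (P.map T) y ≤ cdf P x := by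
  have := Measure.isProbabilityMeasure_map (μ := P) hT.measurable.aemeasurable
  rw [← ENNReal.ofReal_le_ofReal_iff (cdf_nonneg _ _), ofReal_cdf, ofReal_cdf,
    Measure.map_apply hT.measurable measurableSet_Iic]
  exact measure_mono fun z hz => (hT.reflect_lt (lt_of_le_of_lt hz h)).le

theorem eq_quantile_map_cdf (hT : Monotone T) {x : ℝ} (h0 : cdf P x ≠ 0) (h1 : cdf P x ≠ 1)
    (hrat : ∀ q : ℚ, cdf (P.map T) q ≠ cdf P x) : T x = quantile (P.map T) (cdf P x) := by
  have hpos := (cdf_nonneg P x).lt_of_ne' h0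
  have hlt1 := (cdf_le_one P x).lt_of_ne h1
  refine le_antisymm ?_ (quantile_le_of_le_cdf hpos (cdf_le_cdf_map_apply hT x))
  by_contra! hlt
  obtain ⟨q, hq, hqx⟩ := exists_rat_btwn hlt
  exact hrat q (le_antisymm (cdf_map_le_cdf_of_lt hT hqx) (le_cdf_of_quantile_lt hlt1 hq))

end Monotone

end ProbabilityTheory

theorem monotone_transport_map_ae_unique_general
    (P Q : Measure ℝ) [IsProbabilityMeasure P]
    (hP_atomless : ∀ x : ℝ, P {x} = 0)
    (T : ℝ → ℝ) (hT_mono : Monotone T) (hT_push : Measure.map T P = Q) :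
    ∀ᵐ x ∂P, T x = quantile Q (cdf P x) := by
  have : NullSingletonClass P := ⟨hP_atomless⟩
  subst hT_push
  have hC : (insert 0 (insert 1 (range fun q : ℚ => cdf (P.map T) q))).Countable :=
    ((countable_range _).insert 1).insert 0
  filter_upwards [ae_cdf_notMem P hC] with x hx
  simp only [mem_insert_iff, mem_range, not_or, not_exists] at hx
  obtain ⟨h0, h1, hrat⟩ := hx
  exact eq_quantile_map_cdf hT_mono h0 h1 hrat

/-- A monotone nondecreasing map `T` pushing an atomless probability measure `P` on `ℝ`
forward onto `Q` agrees `P`-almost everywhere with `x ↦ F_Q⁻¹(F_P(x))`; in particular the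
monotone transport map from `P` to `Q` is `P`-a.e. unique. -/
theorem monotone_transport_map_ae_unique
    (P Q : Measure ℝ) [IsProbabilityMeasure P] [IsProbabilityMeasure Q]
    (hP_atomless : ∀ x : ℝ, P {x} = 0)
    (T : ℝ → ℝ) (hT_mono : Monotone T) (hT_push : Measure.map T P = Q) :
    ∀ᵐ x ∂P, T x = quantile Q (cdf P x) :=
  monotone_transport_map_ae_unique_general P Q hP_atomless T hT_mono hT_push
end
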